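/- Let v > 0, d > 0, t ≤ n with n > 0, l ≥ 2. Define d̂(p) = (v·d·t/n) · p^(1-l)/(1-p) for p ∈ (0,1), and let x(p) = v·p/(1-p), so that d̂(p) = x(p)·d · t/(n·p^l). Then at the minimizer p = (l-1)/l of this function over p ∈ (0,1), the number of Sybil accounts x equals (l-1)·v, and hence the minimum total deposit x·d at the optimal p equals (l-1)·v·d. -/

import Mathlib

/-- The expected Sybil deposit `d̂(p) = x(p)·d·t/(n·p^l)` with `x(p) = v·p/(1-p)`
is minimized over `p ∈ (0,1)` at `p = (l-1)/l`, and at this minimizer the total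
deposit `x·d` equals `(l-1)·v·d`. -/
theorem sybil_min_deposit (v d : ℝ) (t n l : ℕ)
    (hv : 0 < v) (hd : 0 < d) (ht : t ≤ n) (hn : 0 < n) (hl : 2 ≤ l) :
    (∀ p ∈ Set.Ioo (0:ℝ) 1,
        (v * (((l:ℝ) - 1) / l) / (1 - ((l:ℝ) - 1) / l)) * d * t
            / (n * (((l:ℝ) - 1) / l) ^ l)
          ≤ (v * p / (1 - p)) * d * t / (n * p ^ l)) ∧
    (v * (((l:ℝ) - 1) / l) / (1 - ((l:ℝ) - 1) / l)) * d = ((l:ℝ) - 1) * v * d := by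
  have hL : (2:ℝ) ≤ (l:ℝ) := by exact_mod_cast hl
  have hL0 : (0:ℝ) < l := by linarith
  have hL1 : (0:ℝ) < (l:ℝ) - 1 := by linarith
  have hn0 : (0:ℝ) < n := by exact_mod_cast hn
  have hps0 : (0:ℝ) < ((l:ℝ) - 1) / l := div_pos hL1 hL0
  have hps1 : ((l:ℝ) - 1) / l < 1 := by rw [div_lt_one hL0]; linarith
  have hcast : ((l - 1 : ℕ) : ℝ) = (l:ℝ) - 1 := by
    have : 1 ≤ l := by omega
    push_cast [this]; ring
  -- rewrite lemma
  have hrw : ∀ q : ℝ, 0 < q → q < 1 →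
      (v * q / (1 - q)) * d * t / (n * q ^ l)
        = (v * d * t / n) / (q ^ (l - 1) * (1 - q)) := by
    intro q hq0 hq1
    have h1q : (0:ℝ) < 1 - q := by linarith
    have hpow : q ^ l = q ^ (l - 1) * q := by
      rw [← pow_succ]; congr 1; omega
    rw [hpow]
    field_simp
  constructor
  · intro p hp
    obtain ⟨hp0, hp1⟩ := hp
    have h1p : (0:ℝ) < 1 - p := by linarith
    -- AM-GM core
    have key : p ^ (l - 1) * (1 - p)
        ≤ (((l:ℝ) - 1) / l) ^ (l - 1) * (1 - ((l:ℝ) - 1) / l) := by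
      set a : ℝ := (l:ℝ) / ((l:ℝ) - 1) * p with ha
      set b : ℝ := (l:ℝ) * (1 - p) with hb
      have ha0 : 0 ≤ a := by positivity
      have hb0 : 0 ≤ b := by positivity
      have hw1 : (0:ℝ) ≤ ((l:ℝ) - 1) / l := le_of_lt hps0
      have hw2 : (0:ℝ) ≤ 1 / l := by positivity
      have hsum : ((l:ℝ) - 1) / l + 1 / l = 1 := by field_simp; ring
      have amgm := Real.geom_mean_le_arith_mean2_weighted hw1 hw2 ha0 hb0 hsum
      have hle1 : a ^ (((l:ℝ) - 1) / l) * b ^ ((1:ℝ) / l) ≤ 1 := by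
        refine amgm.trans_eq ?_
        rw [ha, hb]; field_simp; ring
      have hpowle : (a ^ (((l:ℝ) - 1) / l) * b ^ ((1:ℝ) / l)) ^ ((l:ℝ)) ≤ 1 := by
        apply Real.rpow_le_one (by positivity) hle1 (le_of_lt hL0)
      have hexp : (a ^ (((l:ℝ) - 1) / l) * b ^ ((1:ℝ) / l)) ^ ((l:ℝ))
          = a ^ ((l:ℝ) - 1) * b := by
        rw [Real.mul_rpow (by positivity) (by positivity),
            ← Real.rpow_mul ha0, ← Real.rpow_mul hb0]
        have e1 : ((l:ℝ) - 1) / l * l = (l:ℝ) - 1 := by field_simp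
        have e2 : (1:ℝ) / l * l = 1 := by field_simp
        rw [e1, e2, Real.rpow_one]
      rw [hexp] at hpowle
      have hnat : a ^ ((l:ℝ) - 1) = a ^ (l - 1) := by
        rw [← hcast, Real.rpow_natCast]
      rw [hnat] at hpowle
      have heq : p ^ (l - 1) * (1 - p)
          = (a ^ (l - 1) * b) * ((((l:ℝ) - 1) / l) ^ (l - 1) * (1 - ((l:ℝ) - 1) / l)) := by
        rw [ha, hb]
        have h1 : 1 - ((l:ℝ) - 1) / l = 1 / l := by field_simp; ring
        rw [h1, mul_pow, mul_assoc, div_pow, div_pow]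
        field_simp
      rw [heq]
      calc (a ^ (l - 1) * b) * ((((l:ℝ) - 1) / l) ^ (l - 1) * (1 - ((l:ℝ) - 1) / l))
          ≤ 1 * ((((l:ℝ) - 1) / l) ^ (l - 1) * (1 - ((l:ℝ) - 1) / l)) := by
            apply mul_le_mul_of_nonneg_right hpowle
            have : (0:ℝ) < 1 - ((l:ℝ) - 1) / l := by linarith
            positivity
        _ = _ := one_mul _
    rw [hrw _ hps0 hps1, hrw p hp0 hp1]
    have hgp : (0:ℝ) < p ^ (l - 1) * (1 - p) := by positivity
    have hC : (0:ℝ) ≤ v * d * t / n := by positivity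
    gcongr
  · have h1 : 1 - ((l:ℝ) - 1) / l = 1 / l := by field_simp; ring
    rw [h1]
    field_simp
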